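/- Let S = {(v,w) ∈ ℕ² : 0 ≤ v,w ≤ 3} \ {(2,3),(3,2),(3,3)} index the degree-3 approximate Euclidean order basis (13 modes) on the reference quadrilateral. Let M be the diagonal real S×S matrix with M_{(v,w),(v,w)} = 4/((2v+1)(2w+1)). For real parameters q0, q1, q2, let Q be the symmetric S×S matrix whose only nonzero entries (listing one entry of each symmetric pair) are Q_{(1,3),(1,3)} = Q_{(3,1),(3,1)} = q0, Q_{(1,3),(3,1)} = q2, and Q_{(2,2),(2,2)} = q1. Then M + Q is positive definite if and only if 21·q0 > −4, 25·q1 > −4, and 21·q0·(21·q0 + 8) − 441·q2² + 16 > 0. -/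

import Mathlib

/-- The index set of the degree-3 approximate Euclidean order basis (13 modes):
modes `(v,w)` with `0 ≤ v,w ≤ 3` excluding `(2,3)`, `(3,2)` and `(3,3)`. -/
def AE3 : Type := {p : Fin 4 × Fin 4 // p ≠ (2, 3) ∧ p ≠ (3, 2) ∧ p ≠ (3, 3)}

instance : Fintype AE3 := Subtype.fintype _
instance : DecidableEq AE3 := Subtype.instDecidableEq

/-- Modal mass matrix of the degree-3 approximate Euclidean order Legendre basis:
`M_{(v,w),(v,w)} = 4/((2v+1)(2w+1))`. -/
noncomputable def massAE3 : Matrix AE3 AE3 ℝ :=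
  Matrix.diagonal fun p =>
    (4 : ℝ) / (((2 * (p.val.1 : ℕ) + 1) * (2 * (p.val.2 : ℕ) + 1) : ℕ) : ℝ)

/-- The symmetric filter matrix `Q(q0, q1, q2)` for the degree-3 approximate Euclidean
order basis. -/
def filterAE3 (q0 q1 q2 : ℝ) : Matrix AE3 AE3 ℝ :=
  fun i j =>
    if (i.val = (1, 3) ∧ j.val = (1, 3)) ∨ (i.val = (3, 1) ∧ j.val = (3, 1)) then q0
    else if (i.val = (1, 3) ∧ j.val = (3, 1)) ∨ (i.val = (3, 1) ∧ j.val = (1, 3)) then q2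
    else if i.val = (2, 2) ∧ j.val = (2, 2) then q1
    else 0

/-!
On the modes `(1,3)`, `(3,1)`, `(2,2)` and the remaining ten, `M + Q` is block diagonal: a
`2 × 2` block `[[4/21 + q0, q2], [q2, 4/21 + q0]]`, the scalar `4/25 + q1`, and the positive mass
entries. So it is positive definite iff `4/21 + q0 > 0`, `q2² < (4/21 + q0)²` and
`4/25 + q1 > 0`, which are the stated inequalities up to the factors 21, 441 and 25.
-/

open Matrix Finset

namespace AE3

def m13 : AE3 := ⟨(1, 3), by decide⟩
def m31 : AE3 := ⟨(3, 1), by decide⟩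
def m22 : AE3 := ⟨(2, 2), by decide⟩

def others : Finset AE3 := {m13, m31, m22}ᶜ

lemma sum_univ_eq (f : AE3 → ℝ) :
    ∑ i, f i = f m13 + f m31 + f m22 + ∑ i ∈ others, f i := by
  rw [← sum_add_sum_compl {m13, m31, m22} f, sum_insert (by decide), sum_pair (by decide),
    others]
  ring

lemma val_ne_of_mem_others {i : AE3} (hi : i ∈ others) :
    i.val ≠ (1, 3) ∧ i.val ≠ (3, 1) ∧ i.val ≠ (2, 2) := by
  simp only [others, mem_compl, mem_insert, mem_singleton, not_or] at hi
  exact ⟨fun e => hi.1 (Subtype.ext e), fun e => hi.2.1 (Subtype.ext e),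
    fun e => hi.2.2 (Subtype.ext e)⟩

end AE3

open AE3

lemma filterAE3_eq_zero_of_left_mem_others (q0 q1 q2 : ℝ) {i : AE3} (hi : i ∈ others) (j : AE3) :
    filterAE3 q0 q1 q2 i j = 0 := by
  obtain ⟨h1, h2, h3⟩ := val_ne_of_mem_others hi
  simp [filterAE3, h1, h2, h3]

lemma filterAE3_eq_zero_of_right_mem_others (q0 q1 q2 : ℝ) (i : AE3) {j : AE3} (hj : j ∈ others) :
    filterAE3 q0 q1 q2 i j = 0 := by
  obtain ⟨h1, h2, h3⟩ := val_ne_of_mem_others hj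
  simp [filterAE3, h1, h2, h3]

lemma filterAE3_isSymm (q0 q1 q2 : ℝ) : (filterAE3 q0 q1 q2).IsSymm :=
  IsSymm.ext fun i j => by unfold filterAE3; grind

lemma filterAE3_mulVec (q0 q1 q2 : ℝ) (x : AE3 → ℝ) (i : AE3) :
    (filterAE3 q0 q1 q2 *ᵥ x) i = filterAE3 q0 q1 q2 i m13 * x m13 +
      filterAE3 q0 q1 q2 i m31 * x m31 + filterAE3 q0 q1 q2 i m22 * x m22 := by
  rw [mulVec, dotProduct, sum_univ_eq, sum_eq_zero fun j hj => by
    rw [filterAE3_eq_zero_of_right_mem_others q0 q1 q2 i hj, zero_mul], add_zero]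

lemma dotProduct_filterAE3_mulVec (q0 q1 q2 : ℝ) (x : AE3 → ℝ) :
    x ⬝ᵥ (filterAE3 q0 q1 q2 *ᵥ x) =
      q0 * x m13 ^ 2 + 2 * q2 * x m13 * x m31 + q0 * x m31 ^ 2 + q1 * x m22 ^ 2 := by
  rw [dotProduct, sum_univ_eq, sum_eq_zero fun i hi => by
    simp [filterAE3_mulVec, filterAE3_eq_zero_of_left_mem_others q0 q1 q2 hi]]
  simp only [filterAE3_mulVec]
  simp only [m13, m31, m22, filterAE3, Prod.mk.injEq, Fin.reduceEq, Fin.isValue, ne_eq,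
    and_self, and_false, and_true, or_false, or_true, or_self, ↓reduceIte, zero_mul, add_zero,
    zero_add]
  ring

lemma massAE3_apply_self_pos (i : AE3) : 0 < massAE3 i i := by
  rw [massAE3, diagonal_apply_eq]
  positivity

lemma dotProduct_massAE3_mulVec (x : AE3 → ℝ) :
    x ⬝ᵥ (massAE3 *ᵥ x) = ∑ i, massAE3 i i * x i ^ 2 := by
  simp only [massAE3, dotProduct, mulVec_diagonal, diagonal_apply_eq]
  exact sum_congr rfl fun i _ => by ring

lemma massAE3_apply_m13 : massAE3 m13 m13 = 4 / 21 := by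
  rw [massAE3, diagonal_apply_eq]; norm_num [m13]

lemma massAE3_apply_m31 : massAE3 m31 m31 = 4 / 21 := by
  rw [massAE3, diagonal_apply_eq]; norm_num [m31]

lemma massAE3_apply_m22 : massAE3 m22 m22 = 4 / 25 := by
  rw [massAE3, diagonal_apply_eq]; norm_num [m22]

lemma dotProduct_massAE3_add_filterAE3_mulVec (q0 q1 q2 : ℝ) (x : AE3 → ℝ) :
    x ⬝ᵥ ((massAE3 + filterAE3 q0 q1 q2) *ᵥ x) =
      ((4 / 21 + q0) * x m13 ^ 2 + 2 * q2 * x m13 * x m31 + (4 / 21 + q0) * x m31 ^ 2) +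
        (4 / 25 + q1) * x m22 ^ 2 + ∑ i ∈ others, massAE3 i i * x i ^ 2 := by
  rw [add_mulVec, dotProduct_add, dotProduct_massAE3_mulVec, dotProduct_filterAE3_mulVec,
    sum_univ_eq, massAE3_apply_m13, massAE3_apply_m31, massAE3_apply_m22]
  ring

lemma binaryForm_pos_iff {a b c : ℝ} :
    (∀ s t : ℝ, s ≠ 0 ∨ t ≠ 0 → 0 < a * s ^ 2 + 2 * b * s * t + c * t ^ 2) ↔
      0 < a ∧ b ^ 2 < a * c := by
  constructor
  · intro h
    have ha : 0 < a := by simpa using h 1 0 (by norm_num)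
    have hdet := h (-b) a (Or.inr ha.ne')
    exact ⟨ha, by nlinarith⟩
  · rintro ⟨ha, hdet⟩ s t hst
    rcases eq_or_ne t 0 with rfl | ht
    · have hs : s ≠ 0 := by simpa using hst
      simpa using mul_pos ha (sq_pos_of_ne_zero hs)
    · have hsq : a * (a * s ^ 2 + 2 * b * s * t + c * t ^ 2) =
          (a * s + b * t) ^ 2 + (a * c - b ^ 2) * t ^ 2 := by ring
      have hrem := mul_pos (sub_pos.2 hdet) (sq_pos_of_ne_zero ht)
      refine pos_of_mul_pos_right ?_ ha.le
      rw [hsq]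
      linarith [sq_nonneg (a * s + b * t)]

lemma massAE3_add_filterAE3_isHermitian (q0 q1 q2 : ℝ) :
    (massAE3 + filterAE3 q0 q1 q2).IsHermitian := by
  rw [isHermitian_iff_isSymm]
  exact (isSymm_diagonal _).add (filterAE3_isSymm q0 q1 q2)

lemma exists_eq_zero_on_others (s t u : ℝ) :
    ∃ x : AE3 → ℝ, x m13 = s ∧ x m31 = t ∧ x m22 = u ∧ ∀ i ∈ others, x i = 0 := by
  refine ⟨Pi.single m13 s + Pi.single m31 t + Pi.single m22 u, by simp +decide,
    by simp +decide, by simp +decide, fun i hi => ?_⟩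
  simp_all [others]

lemma pos_dotProduct_massAE3_add_filterAE3_mulVec {q0 q1 q2 : ℝ}
    (hblock : ∀ s t : ℝ, s ≠ 0 ∨ t ≠ 0 →
      0 < (4 / 21 + q0) * s ^ 2 + 2 * q2 * s * t + (4 / 21 + q0) * t ^ 2)
    (h22 : 0 < 4 / 25 + q1) {x : AE3 → ℝ} (hx : x ≠ 0) :
    0 < x ⬝ᵥ ((massAE3 + filterAE3 q0 q1 q2) *ᵥ x) := by
  rw [dotProduct_massAE3_add_filterAE3_mulVec]
  have hblock_nonneg : 0 ≤ (4 / 21 + q0) * x m13 ^ 2 + 2 * q2 * x m13 * x m31 +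
      (4 / 21 + q0) * x m31 ^ 2 := by
    by_cases h : x m13 ≠ 0 ∨ x m31 ≠ 0
    · exact (hblock _ _ h).le
    · push Not at h
      simp [h.1, h.2]
  have hrest_nonneg : 0 ≤ ∑ i ∈ others, massAE3 i i * x i ^ 2 :=
    sum_nonneg fun i _ => mul_nonneg (massAE3_apply_self_pos i).le (sq_nonneg _)
  have h22_nonneg : 0 ≤ (4 / 25 + q1) * x m22 ^ 2 := mul_nonneg h22.le (sq_nonneg _)
  obtain ⟨i, hi⟩ := Function.ne_iff.mp hx
  by_cases hio : i ∈ others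
  · have := sum_pos' (fun j _ => mul_nonneg (massAE3_apply_self_pos j).le (sq_nonneg (x j)))
      ⟨i, hio, mul_pos (massAE3_apply_self_pos i) (sq_pos_of_ne_zero hi)⟩
    linarith
  · simp only [others, mem_compl, mem_insert, mem_singleton, not_not] at hio
    rcases hio with rfl | rfl | rfl
    · linarith [hblock (x m13) (x m31) (Or.inl hi)]
    · linarith [hblock (x m13) (x m31) (Or.inr hi)]
    · linarith [mul_pos h22 (sq_pos_of_ne_zero hi)]

lemma massAE3_add_filterAE3_posDef_iff (q0 q1 q2 : ℝ) :
    (massAE3 + filterAE3 q0 q1 q2).PosDef ↔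
      (∀ s t : ℝ, s ≠ 0 ∨ t ≠ 0 →
        0 < (4 / 21 + q0) * s ^ 2 + 2 * q2 * s * t + (4 / 21 + q0) * t ^ 2) ∧
      0 < 4 / 25 + q1 := by
  rw [posDef_iff_dotProduct_mulVec, and_iff_right (massAE3_add_filterAE3_isHermitian q0 q1 q2)]
  simp only [star_trivial]
  refine ⟨fun h => ?_, fun ⟨hblock, h22⟩ x hx =>
    pos_dotProduct_massAE3_add_filterAE3_mulVec hblock h22 hx⟩
  have hsupp (s t u : ℝ) (hstu : s ≠ 0 ∨ t ≠ 0 ∨ u ≠ 0) :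
      0 < (4 / 21 + q0) * s ^ 2 + 2 * q2 * s * t + (4 / 21 + q0) * t ^ 2 +
        (4 / 25 + q1) * u ^ 2 := by
    obtain ⟨x, h13, h31, h22, hothers⟩ := exists_eq_zero_on_others s t u
    have hx0 : x ≠ 0 := by
      rintro rfl
      subst_vars
      simp at hstu
    have hrest : ∑ i ∈ others, massAE3 i i * x i ^ 2 = 0 :=
      sum_eq_zero fun i hi => by rw [hothers i hi]; ring
    simpa [dotProduct_massAE3_add_filterAE3_mulVec, h13, h31, h22, hrest] using h hx0
  exact ⟨fun s t hst => by simpa using hsupp s t 0 (hst.imp_right Or.inl),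
    by simpa using hsupp 0 0 1 (by norm_num)⟩

/-- For the degree-3 approximate Euclidean order basis, `M + Q` is positive definite iff
`21 q0 > -4`, `25 q1 > -4`, and `21 q0 (21 q0 + 8) - 441 q2² + 16 > 0`. -/
theorem stmt_6 (q0 q1 q2 : ℝ) :
    (massAE3 + filterAE3 q0 q1 q2).PosDef ↔
      21 * q0 > -4 ∧ 25 * q1 > -4 ∧
      21 * q0 * (21 * q0 + 8) - 441 * q2 ^ 2 + 16 > 0 := by
  rw [massAE3_add_filterAE3_posDef_iff, binaryForm_pos_iff]
  -- `21 q0 (21 q0 + 8) - 441 q2² + 16 = 441 ((4/21 + q0)² - q2²)`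
  constructor
  · rintro ⟨⟨h13, hdet⟩, h22⟩
    exact ⟨by linarith, by linarith, by nlinarith⟩
  · rintro ⟨h13, h22, hdet⟩
    exact ⟨⟨by linarith, by nlinarith⟩, by linarith⟩
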